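/- If λ_k = c_λ (k+1)^{(p−2)/2} for all k ∈ ℕ, then for every k ≥ 1, min_{0 ≤ i < k} ‖∇f(x_i)‖ ≤ (c_λ^{1/p}/√k) · (2Δ + L (L/c_λ)^{2/(p−2)} (1 + log k))^{(p−1)/p}. -/

import Mathlib

/-! Write `g_i = ‖∇f(x_i)‖` and `r_i = ‖s_i‖`; the step satisfies `g_i = λ_i r_i^{p-1}`. The descent
lemma gives `f(x_{i+1}) ≤ f(x_i) - g_i r_i + L/2 r_i²`, and `L r_i²` can exceed `g_i r_i` only when
`λ_i r_i^{p-2} < L`, in which case `r_i² ≤ (L/λ_i)^{2/(p-2)} = (L/c)^{2/(p-2)}/(i+1)`. Summing,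
`∑_{i<k} g_i r_i ≤ 2Δ + L (L/c)^{2/(p-2)} (1 + log k) =: B`, so some `j < k` has
`g_j r_j ≤ B/k`, and then `g_j^p = λ_j (g_j r_j)^{p-1} ≤ c k^{(p-2)/2} (B/k)^{p-1}` is the claimed
bound raised to the power `p`. -/

open scoped Classical RealInnerProductSpace
open Real Finset

section RealInequalities

variable {g r lam L p : ℝ}

theorem mul_sq_le_of_eq_mul_rpow (hr : 0 ≤ r) (hlam : 0 < lam) (hL : 0 ≤ L) (hp : 2 < p)
    (hg : g = lam * r ^ (p - 1)) : L * r ^ 2 ≤ g * r + L * (L / lam) ^ (2 / (p - 2)) := by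
  have hg0 : 0 ≤ g := hg ▸ by positivity
  have hC : 0 ≤ L * (L / lam) ^ (2 / (p - 2)) := by positivity
  rcases le_or_gt (L * r) g with hLr | hLr
  · nlinarith
  have hr0 : 0 < r := by
    by_contra! h
    rw [le_antisymm h hr, mul_zero] at hLr
    linarith
  have hsmall : r ^ (p - 2) ≤ L / lam := by
    rw [le_div_iff₀ hlam]
    have : lam * r ^ (p - 2) * r < L * r := by
      rwa [mul_assoc, ← rpow_add_one hr0.ne', show p - 2 + 1 = p - 1 by ring, ← hg]
    nlinarith
  have hsq : r ^ 2 ≤ (L / lam) ^ (2 / (p - 2)) := by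
    calc r ^ 2 = (r ^ (p - 2)) ^ (2 / (p - 2)) := by
          rw [← rpow_mul hr, mul_div_cancel₀ _ (by linarith), rpow_two]
      _ ≤ _ := by gcongr
  nlinarith [mul_le_mul_of_nonneg_left hsq hL, mul_nonneg hg0 hr]

theorem div_mul_rpow_rpow_eq {c t : ℝ} (hL : 0 ≤ L) (hc : 0 ≤ c) (ht : 0 ≤ t) (hp : p ≠ 2) :
    (L / (c * t ^ ((p - 2) / 2))) ^ (2 / (p - 2)) = (L / c) ^ (2 / (p - 2)) / t := by
  rw [div_rpow hL (by positivity), mul_rpow hc (by positivity), ← rpow_mul ht,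
    div_mul_div_cancel₀ two_ne_zero, div_self (sub_ne_zero.mpr hp), rpow_one,
    div_rpow hL hc, div_div]

theorem sum_le_sub_add_mul_one_add_log {a F : ℕ → ℝ} {C : ℝ} (hC : 0 ≤ C)
    (h : ∀ i, a i ≤ F i - F (i + 1) + C / (i + 1)) (k : ℕ) :
    ∑ i ∈ range k, a i ≤ F 0 - F k + C * (1 + Real.log k) := by
  have hharm : ∑ i ∈ range k, ((i : ℝ) + 1)⁻¹ ≤ 1 + Real.log k := by
    simpa [harmonic, Rat.cast_sum] using harmonic_le_one_add_log k
  calc ∑ i ∈ range k, a i ≤ ∑ i ∈ range k, (F i - F (i + 1) + C / (i + 1)) :=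
        sum_le_sum fun i _ => h i
    _ = F 0 - F k + C * ∑ i ∈ range k, ((i : ℝ) + 1)⁻¹ := by
      rw [sum_add_distrib, sum_range_sub', mul_sum]; rfl
    _ ≤ F 0 - F k + C * (1 + Real.log k) := by gcongr

theorem rpow_eq_mul_mul_rpow (hg0 : 0 ≤ g) (hr : 0 ≤ r) (hp : 1 < p)
    (hg : g = lam * r ^ (p - 1)) : g ^ p = lam * (g * r) ^ (p - 1) := by
  rw [mul_rpow hg0 hr, mul_left_comm, ← hg, ← rpow_add_one' hg0 (by linarith), sub_add_cancel]

theorem le_rate_of_mul_le_div {c B K : ℝ} (hr : 0 ≤ r) (hlam : 0 ≤ lam) (hp : 1 < p)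
    (hK : 0 < K) (hg : g = lam * r ^ (p - 1)) (hlamK : lam ≤ c * K ^ ((p - 2) / 2))
    (hgr : g * r ≤ B / K) :
    g ≤ c ^ (1 / p) / √K * B ^ ((p - 1) / p) := by
  have hg0 : 0 ≤ g := hg ▸ by positivity
  have hB : 0 ≤ B := by
    have := mul_nonneg ((mul_nonneg hg0 hr).trans hgr) hK.le
    rwa [div_mul_cancel₀ _ hK.ne'] at this
  have hc : 0 ≤ c := nonneg_of_mul_nonneg_left (hlam.trans hlamK) (by positivity)
  have hp0 : 0 < p := by linarith
  rw [← rpow_le_rpow_iff hg0 (by positivity) hp0, rpow_eq_mul_mul_rpow hg0 hr hp hg]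
  calc lam * (g * r) ^ (p - 1) ≤ c * K ^ ((p - 2) / 2) * (B / K) ^ (p - 1) := by
        gcongr
    _ = (c ^ (1 / p) / √K * B ^ ((p - 1) / p)) ^ p := by
        have hKp : K ^ (p - 1) = K ^ ((p - 2) / 2) * K ^ (1 / 2 * p) := by
          rw [← rpow_add hK]; ring_nf
        rw [mul_rpow (by positivity) (by positivity), div_rpow (by positivity) (sqrt_nonneg K),
          ← rpow_mul hc, sqrt_eq_rpow, ← rpow_mul hK.le, ← rpow_mul hB, div_rpow hB hK.le, hKp,
          one_div_mul_cancel hp0.ne', div_mul_cancel₀ _ hp0.ne', rpow_one]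
        field_simp

end RealInequalities

section RegularizedStep

variable {E : Type*} [NormedAddCommGroup E] [InnerProductSpace ℝ E]

/-- The minimizer of the regularized model `s ↦ ⟪v, s⟫ + lam / p * ‖s‖ ^ p`. -/
noncomputable def regStep (lam p : ℝ) (v : E) : E :=
  if v = 0 then 0 else -((lam * ‖v‖ ^ (p - 2)) ^ (-(1 : ℝ) / (p - 1))) • v

variable {lam p : ℝ} {v : E}

theorem inner_regStep (hlam : 0 ≤ lam) : ⟪v, regStep lam p v⟫ = -(‖v‖ * ‖regStep lam p v‖) := by
  unfold regStep
  split_ifs with hv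
  · simp
  · have hη : 0 ≤ (lam * ‖v‖ ^ (p - 2)) ^ (-(1 : ℝ) / (p - 1)) := by positivity
    rw [inner_smul_right, real_inner_self_eq_norm_sq, norm_smul, norm_neg, norm_of_nonneg hη]
    ring

/-- The stationarity condition `v + lam ‖s‖ ^ (p - 2) • s = 0` of the model, in norm. -/
theorem norm_eq_mul_norm_regStep_rpow (hlam : 0 < lam) (hp : 1 < p) :
    ‖v‖ = lam * ‖regStep lam p v‖ ^ (p - 1) := by
  unfold regStep
  split_ifs with hv
  · simp [hv, zero_rpow (sub_pos.mpr hp).ne']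
  · have hg : 0 < ‖v‖ := norm_pos_iff.mpr hv
    have hA : 0 < lam * ‖v‖ ^ (p - 2) := by positivity
    rw [norm_smul, norm_neg, norm_of_nonneg (by positivity), mul_rpow (by positivity) hg.le,
      ← rpow_mul hA.le, div_mul_cancel₀ _ (sub_pos.mpr hp).ne', rpow_neg_one,
      mul_inv, ← mul_assoc, ← mul_assoc, mul_inv_cancel₀ hlam.ne', one_mul, ← rpow_neg hg.le,
      ← rpow_add hg]
    ring_nf
    exact (rpow_one _).symm

end RegularizedStep

section Descent

variable {E : Type*} [NormedAddCommGroup E] [InnerProductSpace ℝ E] [CompleteSpace E]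
  {f : E → ℝ} {f' : E → E} {L lam p : ℝ}

theorem image_add_le_of_lipschitz_gradient (hf : ∀ y, HasGradientAt f (f' y) y)
    (hlip : ∀ y z, ‖f' y - f' z‖ ≤ L * ‖y - z‖) (x s : E) :
    f (x + s) ≤ f x + ⟪f' x, s⟫ + L / 2 * ‖s‖ ^ 2 := by
  set φ : ℝ → ℝ := fun t => f (x + t • s) - t * ⟪f' x, s⟫ - L / 2 * t ^ 2 * ‖s‖ ^ 2
  have hφ : ∀ t, HasDerivAt φ (⟪f' (x + t • s) - f' x, s⟫ - L * t * ‖s‖ ^ 2) t := by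
    intro t
    have hline : HasDerivAt (fun t : ℝ => x + t • s) s t := by
      simpa using ((hasDerivAt_id t).smul_const s).const_add x
    have hcomp := (hf (x + t • s)).hasFDerivAt.comp_hasDerivAt t hline
    have hquad := ((hasDerivAt_pow 2 t).const_mul (L / 2)).mul_const (‖s‖ ^ 2)
    refine ((hcomp.sub ((hasDerivAt_id' t).mul_const ⟪f' x, s⟫)).sub hquad).congr_deriv ?_
    simp only [InnerProductSpace.toDual_apply_apply, inner_sub_left]
    ring
  have hanti : AntitoneOn φ (Set.Icc 0 1) := by
    refine antitoneOn_of_deriv_nonpos (convex_Icc 0 1)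
      (fun t _ => (hφ t).continuousAt.continuousWithinAt)
      (fun t _ => (hφ t).differentiableAt.differentiableWithinAt) fun t ht => ?_
    rw [interior_Icc] at ht
    have hgrad : ‖f' (x + t • s) - f' x‖ ≤ L * (t * ‖s‖) := by
      simpa [norm_smul, abs_of_pos ht.1] using hlip (x + t • s) x
    calc deriv φ t ≤ ‖f' (x + t • s) - f' x‖ * ‖s‖ - L * t * ‖s‖ ^ 2 := by
          rw [(hφ t).deriv]; gcongr; exact real_inner_le_norm _ _
      _ ≤ 0 := by nlinarith [mul_le_mul_of_nonneg_right hgrad (norm_nonneg s)]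
  have h01 := hanti (Set.left_mem_Icc.mpr zero_le_one) (Set.right_mem_Icc.mpr zero_le_one)
    zero_le_one
  simp only [φ, zero_smul, one_smul, add_zero] at h01
  linarith

theorem norm_mul_norm_regStep_le (hf : ∀ y, HasGradientAt f (f' y) y)
    (hlip : ∀ y z, ‖f' y - f' z‖ ≤ L * ‖y - z‖) (hL : 0 ≤ L) (hlam : 0 < lam) (hp : 2 < p)
    (x : E) :
    ‖f' x‖ * ‖regStep lam p (f' x)‖ ≤
      2 * (f x - f (x + regStep lam p (f' x))) + L * (L / lam) ^ (2 / (p - 2)) := by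
  have hdescent := image_add_le_of_lipschitz_gradient hf hlip x (regStep lam p (f' x))
  rw [inner_regStep hlam.le] at hdescent
  have := mul_sq_le_of_eq_mul_rpow (norm_nonneg _) hlam hL hp
    (norm_eq_mul_norm_regStep_rpow (v := f' x) hlam (by linarith))
  linarith

end Descent

/-- Parameter-free rate with `λ_k = c_λ (k+1)^{(p-2)/2}`: for all `k ≥ 1`,
`min_{0 ≤ i < k} ‖∇f(x_i)‖ ≤ (c_λ^{1/p}/√k) (2Δ + L (L/c_λ)^{2/(p-2)} (1 + log k))^{(p-1)/p}`. -/
theorem hor_gd_rate_log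
    {E : Type*} [NormedAddCommGroup E] [InnerProductSpace ℝ E] [CompleteSpace E]
    (f : E → ℝ) (f' : E → E)
    (hf : ∀ y, HasGradientAt f (f' y) y)
    (L : ℝ) (hL : 0 < L)
    (hlip : ∀ y z, ‖f' y - f' z‖ ≤ L * ‖y - z‖)
    (hbdd : BddBelow (Set.range f))
    (p : ℝ) (hp : 2 < p)
    (c : ℝ) (hc : 0 < c)
    (lam : ℕ → ℝ) (hlam : ∀ k, lam k = c * ((k : ℝ) + 1) ^ ((p - 2) / 2))
    (x s : ℕ → E)
    (hs : ∀ k, s k = if f' (x k) = 0 then 0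
      else -((lam k * ‖f' (x k)‖ ^ (p - 2)) ^ (-(1 : ℝ) / (p - 1))) • f' (x k))
    (hx : ∀ k, x (k + 1) = x k + s k)
    (Δ : ℝ) (hΔ : Δ = f (x 0) - ⨅ y, f y)
    (k : ℕ) (hk : 1 ≤ k) :
    (Finset.range k).inf' (Finset.nonempty_range_iff.mpr (by omega))
        (fun i => ‖f' (x i)‖) ≤
      c ^ ((1 : ℝ) / p) / Real.sqrt k *
        (2 * Δ + L * (L / c) ^ (2 / (p - 2)) * (1 + Real.log k)) ^ ((p - 1) / p) := by
  have hs : ∀ i, s i = regStep (lam i) p (f' (x i)) := hs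
  have hlam_pos : ∀ i, 0 < lam i := fun i => hlam i ▸ by positivity
  have hnorm : ∀ i, ‖f' (x i)‖ = lam i * ‖s i‖ ^ (p - 1) := fun i =>
    hs i ▸ norm_eq_mul_norm_regStep_rpow (hlam_pos i) (by linarith)
  set B := 2 * Δ + L * (L / c) ^ (2 / (p - 2)) * (1 + Real.log k)
  have hsum : ∑ i ∈ range k, ‖f' (x i)‖ * ‖s i‖ ≤ B := by
    have hstep : ∀ i, ‖f' (x i)‖ * ‖s i‖ ≤
        2 * f (x i) - 2 * f (x (i + 1)) + L * (L / c) ^ (2 / (p - 2)) / (i + 1) := by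
      intro i
      have := norm_mul_norm_regStep_le hf hlip hL.le (hlam_pos i) hp (x i)
      rwa [← hs, ← hx, hlam i, div_mul_rpow_rpow_eq hL.le hc.le (by positivity) hp.ne',
        mul_sub, ← mul_div_assoc] at this
    have hΔ : f (x 0) - f (x k) ≤ Δ := hΔ ▸ by linarith [ciInf_le hbdd (x k)]
    linarith [sum_le_sub_add_mul_one_add_log (by positivity) hstep k]
  have hk₀ : (0 : ℝ) < k := by exact_mod_cast hk
  obtain ⟨j, hj, hjle⟩ := exists_le_of_sum_le ⟨0, mem_range.mpr hk⟩
    (f := fun i => ‖f' (x i)‖ * ‖s i‖) (g := fun _ => B / k)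
    (by rwa [sum_const, card_range, nsmul_eq_mul, mul_div_cancel₀ _ hk₀.ne'])
  have hlamj : lam j ≤ c * (k : ℝ) ^ ((p - 2) / 2) := by
    rw [hlam]
    gcongr
    exact_mod_cast mem_range.mp hj
  exact (inf'_le _ hj).trans <| le_rate_of_mul_le_div (norm_nonneg (s j)) (hlam_pos j).le
    (by linarith) hk₀ (hnorm j) hlamj hjle
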